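/- Let α ≥ 1 and β ≥ α + 1 be integers, let G = (G₁,G₂) ∈ ℂ[X,Y]² satisfy det J_G(X,Y) = c·X^{β−α−1} identically for some nonzero constant c ∈ ℂ, and let H ∈ ℂ[U,V] and S ∈ ℂ[X,Y] satisfy H(G(X,Y)) = X^{β−α}·S(X,Y). If (x₀,y₀) ∈ ℂ² satisfies S(x₀,y₀) = 0 and either x₀ = 0, or x₀ ≠ 0 together with (∂S/∂X)(x₀,y₀) = (∂S/∂Y)(x₀,y₀) = 0, then G(x₀,y₀) is a singular point of the plane curve {H = 0}; that is, the G-image of the union of the singular points of the phantom curve {S = 0} and of {S = 0} ∩ {X = 0} is contained in the singular locus of {H = 0}. -/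

import Mathlib

open MvPolynomial Filter

abbrev PolyPair := MvPolynomial (Fin 2) ℂ × MvPolynomial (Fin 2) ℂ

noncomputable def eval2 (p : MvPolynomial (Fin 2) ℂ) (x y : ℂ) : ℂ :=
  MvPolynomial.eval ![x, y] p

noncomputable def jacDet (P Q : MvPolynomial (Fin 2) ℂ) : MvPolynomial (Fin 2) ℂ :=
  pderiv 0 P * pderiv 1 Q - pderiv 1 P * pderiv 0 Q

noncomputable def polyMap (F : PolyPair) (p : ℂ × ℂ) : ℂ × ℂ :=
  (eval2 F.1 p.1 p.2, eval2 F.2 p.1 p.2)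

/-- `F` is a Keller mapping: its Jacobian determinant is a nonzero constant. -/
def IsKeller (F : PolyPair) : Prop :=
  ∃ c : ℂ, c ≠ 0 ∧ jacDet F.1 F.2 = MvPolynomial.C c

/-- `(u₀,v₀)` is a singular point of the plane curve `{H = 0}`. -/
def IsSingularPoint (H : MvPolynomial (Fin 2) ℂ) (p : ℂ × ℂ) : Prop :=
  eval2 H p.1 p.2 = 0 ∧ eval2 (pderiv 0 H) p.1 p.2 = 0 ∧ eval2 (pderiv 1 H) p.1 p.2 = 0

/-- `G` is the `R`-dual of `F`, where `R(x,y) = (x^{-α}, x^β y + x^{-α} φ(x))`. -/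
def IsRDual (F G : PolyPair) (α β : ℕ) (φ : Polynomial ℂ) : Prop :=
  ∀ x : ℂ, x ≠ 0 → ∀ y : ℂ,
    polyMap G (x, y) = polyMap F ((x ^ α)⁻¹, x ^ β * y + (x ^ α)⁻¹ * Polynomial.eval x φ)

/-- `p` is an asymptotic value of `F` : a limit of `F` along a curve tending to infinity. -/
def IsAsympValue (F : PolyPair) (p : ℂ × ℂ) : Prop :=
  ∃ γ : ℝ → ℂ × ℂ, Continuous γ ∧ Tendsto (fun t => ‖γ t‖) atTop atTop ∧
    Tendsto (fun t => polyMap F (γ t)) atTop (nhds p)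

/-- `F` is a polynomial automorphism of `ℂ²`. -/
def IsPolyAuto (F : PolyPair) : Prop :=
  ∃ Finv : PolyPair, (∀ p, polyMap F (polyMap Finv p) = p) ∧
    (∀ p, polyMap Finv (polyMap F p) = p)

/-! The chain rule reads `∇(H ∘ G) = (∇H ∘ G) · J_G`, so multiplying by the adjugate of `J_G` gives
`det J_G · (∇H ∘ G) = ∇(H ∘ G) · adj J_G`. With `m = β - α ≥ 1` we have
`∇(X^m S) = X^(m-1) · (m S e₁ + X ∇S)` and `det J_G = c X^(m-1)`; cancelling `X^(m-1)` in the
domain `ℂ[X,Y]` *before* evaluating leaves `c · (∇H ∘ G) = (m S e₁ + X ∇S) · adj J_G`, whose right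
side vanishes at `(x₀, y₀)` in both cases. Finally `H(G(x₀, y₀)) = x₀^m S(x₀, y₀) = 0`. -/

namespace MvPolynomial

open Matrix

variable {R σ : Type*} [CommRing R]

theorem eval_aeval (v : σ → R) (g : σ → MvPolynomial σ R) (P : MvPolynomial σ R) :
    eval v (aeval g P) = eval (fun j => eval v (g j)) P := by
  rw [aeval_eq_bind₁]
  exact aeval_bind₁ v g P

theorem pderiv_X_pow_succ_mul (i j : σ) (k : ℕ) (S : MvPolynomial σ R) :
    pderiv i (X j ^ (k + 1) * S) =
      X j ^ k * (((k : MvPolynomial σ R) + 1) * pderiv i (X j) * S + X j * pderiv i S) := by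
  rw [pderiv_mul, pderiv_pow]
  push_cast
  ring

variable [Fintype σ]

theorem pderiv_aeval (g : σ → MvPolynomial σ R) (i : σ) (H : MvPolynomial σ R) :
    pderiv i (aeval g H) = ∑ j, aeval g (pderiv j H) * pderiv i (g j) := by
  classical
  induction H using MvPolynomial.induction_on with
  | C a => simp
  | add p q hp hq => simp only [map_add, hp, hq, add_mul, Finset.sum_add_distrib]
  | mul_X p k hp =>
    simp only [map_mul, aeval_X, pderiv_mul, hp, pderiv_X, map_add, add_mul,
      Finset.sum_add_distrib, Finset.sum_mul]
    congr 1
    · exact Finset.sum_congr rfl fun j _ => mul_right_comm _ _ _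
    · simp [Pi.single_apply]

noncomputable def jacobian (g : σ → MvPolynomial σ R) : Matrix σ σ (MvPolynomial σ R) :=
  of fun j i => pderiv i (g j)

theorem pderiv_aeval_eq_vecMul_jacobian (g : σ → MvPolynomial σ R) (H : MvPolynomial σ R) :
    (fun i => pderiv i (aeval g H)) = (fun j => aeval g (pderiv j H)) ᵥ* jacobian g := by
  ext1 i
  simp only [pderiv_aeval, vecMul, dotProduct, jacobian, of_apply]

variable [DecidableEq σ]

theorem det_jacobian_smul_aeval_pderiv (g : σ → MvPolynomial σ R) (H : MvPolynomial σ R) :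
    (jacobian g).det • (fun j => aeval g (pderiv j H)) =
      (fun i => pderiv i (aeval g H)) ᵥ* (jacobian g).adjugate := by
  rw [pderiv_aeval_eq_vecMul_jacobian, vecMul_vecMul, mul_adjugate, vecMul_smul, vecMul_one]

theorem eval_pderiv_eq_zero_of_det_jacobian_eq [IsDomain R] {g : σ → MvPolynomial σ R}
    {H d : MvPolynomial σ R} {T : σ → MvPolynomial σ R} {c : R} (hc : c ≠ 0) (hd : d ≠ 0)
    (hdet : (jacobian g).det = C c * d) (hT : ∀ i, pderiv i (aeval g H) = d * T i)
    {v : σ → R} (hv : ∀ i, eval v (T i) = 0) (i : σ) :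
    eval (fun j => eval v (g j)) (pderiv i H) = 0 := by
  have key :
      (C c : MvPolynomial σ R) • (fun j => aeval g (pderiv j H)) = T ᵥ* (jacobian g).adjugate := by
    have hT' : (fun i => pderiv i (aeval g H)) = d • T := _root_.funext hT
    apply smul_right_injective _ hd
    dsimp only
    rw [smul_smul, mul_comm, ← hdet, det_jacobian_smul_aeval_pderiv, hT', smul_vecMul]
  have hi := congrArg (eval v) (congrFun key i)
  simp only [Pi.smul_apply, smul_eq_mul, map_mul, eval_C, vecMul, dotProduct, map_sum,
    hv, zero_mul, Finset.sum_const_zero] at hi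
  rw [← eval_aeval]
  exact (mul_eq_zero.mp hi).resolve_left hc

end MvPolynomial

theorem det_jacobian_fin_two (P Q : MvPolynomial (Fin 2) ℂ) :
    (MvPolynomial.jacobian ![P, Q]).det = jacDet P Q := by
  simp [Matrix.det_fin_two, MvPolynomial.jacobian, jacDet]

theorem phantom_image_in_singular_locus_general (α β : ℕ) (hβ : α + 1 ≤ β)
    (G : PolyPair) (c : ℂ) (hc : c ≠ 0)
    (hdet : jacDet G.1 G.2 = MvPolynomial.C c * (X 0 : MvPolynomial (Fin 2) ℂ) ^ (β - α - 1))
    (H S : MvPolynomial (Fin 2) ℂ)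
    (hfac : aeval ![G.1, G.2] H = (X 0 : MvPolynomial (Fin 2) ℂ) ^ (β - α) * S) :
    ∀ x₀ y₀ : ℂ, eval2 S x₀ y₀ = 0 →
      (x₀ = 0 ∨ (x₀ ≠ 0 ∧ eval2 (pderiv 0 S) x₀ y₀ = 0 ∧ eval2 (pderiv 1 S) x₀ y₀ = 0)) →
      IsSingularPoint H (polyMap G (x₀, y₀)) := by
  intro x₀ y₀ hS hcase
  obtain ⟨k, hk, hk'⟩ : ∃ k, β - α - 1 = k ∧ β - α = k + 1 := ⟨_, rfl, by omega⟩
  rw [hk, ← det_jacobian_fin_two] at hdet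
  rw [hk'] at hfac
  set T : Fin 2 → MvPolynomial (Fin 2) ℂ :=
    fun i => ((k : MvPolynomial (Fin 2) ℂ) + 1) * pderiv i (X 0) * S + X 0 * pderiv i S
  have hT (i : Fin 2) : pderiv i (aeval ![G.1, G.2] H) = X 0 ^ k * T i := by
    rw [hfac, pderiv_X_pow_succ_mul]
  have hTv (i : Fin 2) : eval ![x₀, y₀] (T i) = 0 := by
    have hx₀ : x₀ * eval2 (pderiv i S) x₀ y₀ = 0 := by
      rcases hcase with rfl | ⟨-, h0, h1⟩
      · exact zero_mul _
      · fin_cases i <;> simp [h0, h1]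
    have hS' : eval ![x₀, y₀] S = 0 := hS
    simp only [T, map_add, map_mul, hS', mul_zero, zero_add, eval_X]
    exact hx₀
  have hG : (fun j => eval ![x₀, y₀] (![G.1, G.2] j)) =
      ![(polyMap G (x₀, y₀)).1, (polyMap G (x₀, y₀)).2] := by
    ext j; fin_cases j <;> rfl
  have hgrad := eval_pderiv_eq_zero_of_det_jacobian_eq hc (pow_ne_zero k (X_ne_zero 0)) hdet hT hTv
  rw [hG] at hgrad
  refine ⟨?_, hgrad 0, hgrad 1⟩
  show eval _ H = 0
  rw [← hG, ← eval_aeval, hfac, map_mul]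
  exact mul_eq_zero_of_right _ hS

/-- the `G`-image of the singular points of the phantom curve and of
`{S = 0} ∩ {X = 0}` lies in the singular locus of `{H = 0}`. -/
theorem phantom_image_in_singular_locus (α β : ℕ) (hα : 1 ≤ α) (hβ : α + 1 ≤ β)
    (G : PolyPair) (c : ℂ) (hc : c ≠ 0)
    (hdet : jacDet G.1 G.2 = MvPolynomial.C c * (X 0 : MvPolynomial (Fin 2) ℂ) ^ (β - α - 1))
    (H S : MvPolynomial (Fin 2) ℂ)
    (hfac : aeval ![G.1, G.2] H = (X 0 : MvPolynomial (Fin 2) ℂ) ^ (β - α) * S) :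
    ∀ x₀ y₀ : ℂ, eval2 S x₀ y₀ = 0 →
      (x₀ = 0 ∨ (x₀ ≠ 0 ∧ eval2 (pderiv 0 S) x₀ y₀ = 0 ∧ eval2 (pderiv 1 S) x₀ y₀ = 0)) →
      IsSingularPoint H (polyMap G (x₀, y₀)) :=
  phantom_image_in_singular_locus_general α β hβ G c hc hdet H S hfac
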